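/- Let U ∈ ℝ^{Ñ×d} have orthonormal columns with d ≥ 1, where Ñ = J·N, with row blocks U_j ∈ ℝ^{N×d}. Then max_{1 ≤ j ≤ J} Γ(U_j) ≥ 1/J, where Γ(U_j) = min(N·‖U_j‖_∞², ‖U_j‖²). -/

import Mathlib

open MeasureTheory ProbabilityTheory Matrix
open scoped NNReal ENNReal BigOperators

noncomputable section

/-- The spectral (`ℓ²` operator) norm of a real matrix. -/
def specNorm {m n : Type*} [Fintype m] [Fintype n] [DecidableEq n] (A : Matrix m n ℝ) : ℝ :=
  ‖LinearMap.toContinuousLinearMap (Matrix.toEuclideanLin A)‖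

/-- The Frobenius norm of a real matrix. -/
def frobNorm {m n : Type*} [Fintype m] [Fintype n] (A : Matrix m n ℝ) : ℝ :=
  Real.sqrt (∑ i, ∑ j, (A i j) ^ 2)

/-- The entrywise sup ("infinity") norm of a real matrix. -/
def entrySup {m n : Type*} [Fintype m] [Fintype n] (A : Matrix m n ℝ) : ℝ :=
  ⨆ i, ⨆ j, |A i j|

/-- The stable rank `sr(A) = ‖A‖_F² / ‖A‖²`. -/
def stableRank {m n : Type*} [Fintype m] [Fintype n] [DecidableEq n] (A : Matrix m n ℝ) : ℝ :=
  frobNorm A ^ 2 / specNorm A ^ 2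

/-- The block coherence `Γ(A) = min(N·‖A‖_∞², ‖A‖²)` of an `N`-row block `A`. -/
def coherence {n d : Type*} [Fintype n] [Fintype d] [DecidableEq d] (A : Matrix n d ℝ) : ℝ :=
  min ((Fintype.card n : ℝ) * entrySup A ^ 2) (specNorm A ^ 2)

/-- The `j`-th row block of a matrix with `J·N` rows (rows indexed by `Fin J × Fin N`). -/
def rowBlock {J N : ℕ} {d : Type*} (U : Matrix (Fin J × Fin N) d ℝ) (j : Fin J) :
    Matrix (Fin N) d ℝ :=
  Matrix.of fun n c => U (j, n) c

/-- The block diagonal matrix with diagonal blocks `S j : Matrix (Fin (M j)) (Fin N) ℝ`. -/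
def blockDiag {J N : ℕ} {M : Fin J → ℕ} (S : (j : Fin J) → Fin (M j) → Fin N → ℝ) :
    Matrix ((j : Fin J) × Fin (M j)) (Fin J × Fin N) ℝ :=
  Matrix.of fun q r => if q.1 = r.1 then S q.1 q.2 r.2 else 0

/-- The distribution of the diagonal blocks: block `j` has i.i.d. `N(0, 1/M j)` entries, and all
blocks are mutually independent. -/
def blockGaussian (J N : ℕ) (M : Fin J → ℕ) :
    Measure ((j : Fin J) → Fin (M j) → Fin N → ℝ) :=
  Measure.pi fun j => Measure.pi fun _ => Measure.pi fun _ =>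
    gaussianReal 0 (1 / (M j : ℝ≥0))

end

/-! Each column of `U` is a unit vector, so the squared entries of `U` sum to `d`. The squared
entries of an `N × d` block `A` sum to at most `d‖A‖²` (each column has norm at most `‖A‖`) and
to at most `N d ‖A‖_∞²`, hence to at most `d Γ(A)`. Summing over the `J` blocks gives
`d ≤ d J max_j Γ(U_j)`. -/

section

variable {m n : Type*} [Fintype m]

lemma sum_sq_col_eq_one_of_transpose_mul_self_eq_one [DecidableEq n] {U : Matrix m n ℝ}
    (hU : Uᵀ * U = 1) (c : n) : ∑ i, U i c ^ 2 = 1 := by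
  simpa [Matrix.mul_apply, sq] using congrFun (congrFun hU c) c

variable [Fintype n]

lemma sum_sq_col_le_specNorm_sq [DecidableEq n] (A : Matrix m n ℝ) (c : n) :
    ∑ i, A i c ^ 2 ≤ specNorm A ^ 2 := by
  set T := LinearMap.toContinuousLinearMap (Matrix.toEuclideanLin A)
  have hcol : T (EuclideanSpace.single c 1) = WithLp.toLp 2 (A.col c) := by
    simp [T, Matrix.toLpLin_apply]
  have hle : ‖T (EuclideanSpace.single c 1)‖ ≤ specNorm A :=
    (T.le_opNorm _).trans_eq (by simp [specNorm, T])
  calc ∑ i, A i c ^ 2 = ‖T (EuclideanSpace.single c 1)‖ ^ 2 := by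
        simp [hcol, EuclideanSpace.norm_sq_eq]
    _ ≤ specNorm A ^ 2 := pow_le_pow_left₀ (norm_nonneg _) hle 2

lemma abs_le_entrySup (A : Matrix m n ℝ) (i : m) (j : n) : |A i j| ≤ entrySup A :=
  le_ciSup_of_le (Set.finite_range _).bddAbove i
    (le_ciSup (f := fun j => |A i j|) (Set.finite_range _).bddAbove j)

lemma sum_sq_le_card_mul_specNorm_sq [DecidableEq n] (A : Matrix m n ℝ) :
    ∑ i, ∑ c, A i c ^ 2 ≤ Fintype.card n * specNorm A ^ 2 := by
  rw [Finset.sum_comm]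
  simpa using Finset.sum_le_sum fun c (_ : c ∈ Finset.univ) => sum_sq_col_le_specNorm_sq A c

lemma sum_sq_le_card_mul_entrySup_sq (A : Matrix m n ℝ) :
    ∑ i, ∑ c, A i c ^ 2 ≤ Fintype.card n * (Fintype.card m * entrySup A ^ 2) := by
  have hentry : ∀ i c, A i c ^ 2 ≤ entrySup A ^ 2 := fun i c => by
    simpa only [sq_abs] using pow_le_pow_left₀ (abs_nonneg _) (abs_le_entrySup A i c) 2
  calc ∑ i, ∑ c, A i c ^ 2 ≤ ∑ _i : m, ∑ _c : n, entrySup A ^ 2 :=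
        Finset.sum_le_sum fun i _ => Finset.sum_le_sum fun c _ => hentry i c
    _ = Fintype.card n * (Fintype.card m * entrySup A ^ 2) := by simp; ring

lemma sum_sq_le_card_mul_coherence [DecidableEq n] (A : Matrix m n ℝ) :
    ∑ i, ∑ c, A i c ^ 2 ≤ Fintype.card n * coherence A := by
  rw [coherence, mul_min_of_nonneg _ _ (Nat.cast_nonneg _)]
  exact le_min (sum_sq_le_card_mul_entrySup_sq A) (sum_sq_le_card_mul_specNorm_sq A)

end

/-- for an orthonormal-column matrix `U ∈ ℝ^{JN×d}` with `d ≥ 1`, the largest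
block coherence satisfies `max_j Γ(U_j) ≥ 1/J`. -/
theorem statement7 {J N d : ℕ} (hd : 1 ≤ d) (U : Matrix (Fin J × Fin N) (Fin d) ℝ)
    (hU : Uᵀ * U = 1) :
    (1 : ℝ) / (J : ℝ) ≤ ⨆ j : Fin J, coherence (rowBlock U j) := by
  rcases J.eq_zero_or_pos with rfl | hJ
  · -- `1 / 0 = 0`, and so is the supremum over the empty index type `Fin 0`
    simp
  set Γ := ⨆ j : Fin J, coherence (rowBlock U j)
  have hcover : (d : ℝ) ≤ d * (J * Γ) := by
    calc (d : ℝ) = ∑ c, ∑ p, U p c ^ 2 := by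
          simp [sum_sq_col_eq_one_of_transpose_mul_self_eq_one hU]
      _ = ∑ j, ∑ n, ∑ c, rowBlock U j n c ^ 2 := by
          symm; rw [← Fintype.sum_prod_type', Finset.sum_comm]; rfl
      _ ≤ ∑ _j : Fin J, d * Γ := Finset.sum_le_sum fun j _ => by
          simpa using (sum_sq_le_card_mul_coherence (rowBlock U j)).trans
            (mul_le_mul_of_nonneg_left
              (le_ciSup (f := fun j => coherence (rowBlock U j)) (Set.finite_range _).bddAbove j)
              (by positivity))
      _ = d * (J * Γ) := by simp; ring
  rw [div_le_iff₀ (Nat.cast_pos.mpr hJ), mul_comm]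
  exact le_of_mul_le_mul_left (by simpa using hcover) (Nat.cast_pos.mpr hd)
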